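/- Let N ≥ 1 be an integer, 0 < p < 1, and let μ̄, Δ⁻, Δ⁺, I, α⁺, α⁻ be as defined, with 0 ≤ μ̄ − Δ⁻ and μ̄ + Δ⁺ ≤ N. Let (X_t, Y_t)_{t≥0} be a pair of I-valued stochastic processes on a probability space with X_0 = μ̄ + Δ⁺ and Y_0 = μ̄ − Δ⁻ almost surely, such that for every t ≥ 0, on the event {X_t ≠ Y_t}, conditionally on the σ-algebra generated by the trajectory up to time t, the pair moves as follows: (X_{t+1}, Y_{t+1}) = (X_t, Y_t + 1) with probability α⁺(Y_t)/4; (X_t, Y_t − 1) with probability α⁻(Y_t)/4; (X_t + 1, Y_t) with probability α⁺(X_t)/4; (X_t − 1, Y_t) with probability α⁻(X_t)/4; and (X_t, Y_t) with the remaining probability (1 − α⁺(Y_t))/4 + (1 − α⁻(Y_t))/4 + (1 − α⁺(X_t))/4 + (1 − α⁻(X_t))/4. Let T = min{t : X_t = Y_t} be the coupling time. Then E[T] ≤ 2(Δ⁺ + Δ⁻ + 1)². -/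

import Mathlib

open MeasureTheory ProbabilityTheory
open scoped ENNReal

/-- The Metropolis acceptance function `α⁺`. -/
noncomputable def alphaPlus (N : ℕ) (p : ℝ) (μbar Δp : ℕ) (k : ℕ) : ℝ :=
  if k < μbar then 1
  else if k < μbar + Δp then ((N : ℝ) - k) / ((k : ℝ) + 1) * (p / (1 - p))
  else 0

/-- The Metropolis acceptance function `α⁻`. -/
noncomputable def alphaMinus (N : ℕ) (p : ℝ) (μbar Δm : ℕ) (k : ℕ) : ℝ :=
  if μbar < k then 1
  else if μbar - Δm < k then (k : ℝ) / ((N : ℝ) - k + 1) * ((1 - p) / p)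
  else 0

/-- One-step transition kernel of the coupling `(X_t, Y_t)` while `X_t ≠ Y_t`: from
`(a, b)` the pair moves to `(a, b+1)` w.p. `α⁺(b)/4`, to `(a, b-1)` w.p. `α⁻(b)/4`, to
`(a+1, b)` w.p. `α⁺(a)/4`, to `(a-1, b)` w.p. `α⁻(a)/4`, and stays at `(a, b)` with the
remaining probability `(1-α⁺(b))/4 + (1-α⁻(b))/4 + (1-α⁺(a))/4 + (1-α⁻(a))/4`
(probabilities of coinciding outcomes add up). -/
noncomputable def coupleKernel (N : ℕ) (p : ℝ) (μbar Δm Δp : ℕ) (a b a' b' : ℕ) : ℝ :=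
  (if a' = a ∧ b' = b + 1 then alphaPlus N p μbar Δp b / 4 else 0) +
  (if a' = a ∧ b' = b - 1 then alphaMinus N p μbar Δm b / 4 else 0) +
  (if a' = a + 1 ∧ b' = b then alphaPlus N p μbar Δp a / 4 else 0) +
  (if a' = a - 1 ∧ b' = b then alphaMinus N p μbar Δm a / 4 else 0) +
  (if a' = a ∧ b' = b then
      (1 - alphaPlus N p μbar Δp b) / 4 + (1 - alphaMinus N p μbar Δm b) / 4 +
        (1 - alphaPlus N p μbar Δp a) / 4 + (1 - alphaMinus N p μbar Δm a) / 4
    else 0)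

/-
Write `Δ = Δ⁺ + Δ⁻` and let `b < a` be the two positions while the chains are apart.
The distance `a - b` goes down with probability `(α⁺(b) + α⁻(a))/4 ≥ 1/4` (one of the two
summands is `1`) and up with probability `(α⁻(b) + α⁺(a))/4`, which is no larger because `α⁺` is
antitone and `α⁻` monotone. For the concave potential `h(d) = 2d(2Δ+1-d)` the increments are
`h(d+1) - h(d) = 4(Δ-d) ≥ 0` and `h(d-1) - h(d) = -4(Δ-d) - 4`, so `h(d_t) + t` is a
supermartingale up to the coupling time and `E[T] ≤ sup h ≤ 2(Δ+1)²`. Concretely, conditioning on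
every trajectory up to time `t` gives `P(T > t) + E[h(d_{t+1}); T > t+1] ≤ E[h(d_t); T > t]`,
which telescopes.
-/

open Finset

theorem iInf_natCast_eq_tsum_indicator (P : ℕ → Prop) :
    (⨅ (t : ℕ) (_ : P t), (t : ℝ≥0∞)) = ∑' t, {t | ∀ s ≤ t, ¬ P s}.indicator 1 t := by
  classical
  by_cases h : ∃ t, P t
  · have hT : (⨅ (t : ℕ) (_ : P t), (t : ℝ≥0∞)) = Nat.find h :=
      le_antisymm (iInf₂_le _ (Nat.find_spec h))
        (le_iInf₂ fun t ht => by exact_mod_cast Nat.find_min' h ht)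
    have hsurv (t : ℕ) : t ∈ {t | ∀ s ≤ t, ¬ P s} ↔ t ∈ range (Nat.find h) := by
      simp [Nat.lt_find_iff]
    rw [hT, tsum_eq_sum (s := range (Nat.find h))
      fun t ht => Set.indicator_of_notMem (mt (hsurv t).1 ht) 1,
      sum_congr rfl fun t ht => Set.indicator_of_mem ((hsurv t).2 ht) 1]
    simp
  · push Not at h
    simp [h]

section Trajectory
variable {Ω α : Type*}

def trajectory (Z : ℕ → Ω → α) (t : ℕ) (ω : Ω) : Fin (t + 1) → α := fun s => Z s ω

def avoidsUpTo (Z : ℕ → Ω → α) (S : Set α) (t : ℕ) : Set Ω := {ω | ∀ s ≤ t, Z s ω ∉ S}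

theorem trajectory_preimage_singleton (Z : ℕ → Ω → α) (t : ℕ) (v : Fin (t + 1) → α) :
    trajectory Z t ⁻¹' {v} = {ω | ∀ s ≤ t, Z s ω = v (Fin.clamp s t)} := by
  ext ω
  simp only [Set.mem_preimage, Set.mem_singleton_iff, funext_iff, trajectory, Fin.forall_iff,
    Set.mem_ofPred_eq, Nat.lt_succ_iff]
  refine forall₂_congr fun s hs => ?_
  rw [show Fin.clamp s t = ⟨s, Nat.lt_succ_of_le hs⟩ from Fin.ext (min_eq_left hs)]

theorem avoidsUpTo_eq_preimage (Z : ℕ → Ω → α) (S : Set α) (t : ℕ) :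
    avoidsUpTo Z S t = trajectory Z t ⁻¹' {v | ∀ s, v s ∉ S} := by
  ext ω
  simp [avoidsUpTo, trajectory, Fin.forall_iff]

theorem avoidsUpTo_succ_subset (Z : ℕ → Ω → α) (S : Set α) (t : ℕ) :
    avoidsUpTo Z S (t + 1) ⊆ avoidsUpTo Z S t :=
  fun _ hω s hs => hω s (hs.trans t.le_succ)

theorem measurable_trajectory [MeasurableSpace Ω] [MeasurableSpace α] {Z : ℕ → Ω → α}
    (hZ : ∀ t, Measurable (Z t)) (t : ℕ) : Measurable (trajectory Z t) :=
  measurable_pi_lambda _ fun s => hZ s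

end Trajectory

section Drift
variable {Ω : Type*} [MeasurableSpace Ω] {μ : Measure Ω}

theorem setLIntegral_preimage_le_of_forall_fiber {β : Type*} [MeasurableSpace β] [Countable β]
    [MeasurableSingletonClass β] {P : Ω → β} (hP : Measurable P) (W : Set β)
    {F G : Ω → ℝ≥0∞}
    (h : ∀ v ∈ W, ∫⁻ ω in P ⁻¹' {v}, F ω ∂μ ≤ ∫⁻ ω in P ⁻¹' {v}, G ω ∂μ) :
    ∫⁻ ω in P ⁻¹' W, F ω ∂μ ≤ ∫⁻ ω in P ⁻¹' W, G ω ∂μ := by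
  have hW : P ⁻¹' W = ⋃ v ∈ W, P ⁻¹' {v} := by ext; simp
  have hm (v : β) (_ : v ∈ W) : MeasurableSet (P ⁻¹' {v}) := hP (measurableSet_singleton v)
  have hd : W.PairwiseDisjoint (fun v => P ⁻¹' {v}) := fun v _ w _ hvw =>
    (Set.disjoint_singleton.2 hvw).preimage P
  rw [hW, lintegral_biUnion W.to_countable hm hd, lintegral_biUnion W.to_countable hm hd]
  exact ENNReal.tsum_le_tsum fun v => h v v.2

theorem setLIntegral_add_measure_le_of_cond [IsFiniteMeasure μ] {C : Set Ω} {F : Ω → ℝ≥0∞}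
    {c : ℝ≥0∞} (h : μ C ≠ 0 → ∫⁻ ω, F ω ∂μ[|C] + 1 ≤ c) :
    ∫⁻ ω in C, F ω ∂μ + μ C ≤ c * μ C := by
  by_cases h0 : μ C = 0
  · simp [Measure.restrict_eq_zero.2 h0, h0]
  have hcond : ∫⁻ ω in C, F ω ∂μ = μ C * ∫⁻ ω, F ω ∂μ[|C] := by
    rw [ProbabilityTheory.cond, lintegral_smul_measure, smul_eq_mul, ← mul_assoc,
      ENNReal.mul_inv_cancel h0 (measure_ne_top μ C), one_mul]
  calc ∫⁻ ω in C, F ω ∂μ + μ C = (∫⁻ ω, F ω ∂μ[|C] + 1) * μ C := by rw [hcond]; ring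
    _ ≤ c * μ C := by gcongr; exact h h0

theorem lintegral_comp_eq_tsum {Ω β : Type*} [MeasurableSpace Ω] [MeasurableSpace β]
    [Countable β] [MeasurableSingletonClass β] (ν : Measure Ω) {W : Ω → β} (hW : Measurable W)
    (f : β → ℝ≥0∞) : ∫⁻ ω, f (W ω) ∂ν = ∑' b, f b * ν (W ⁻¹' {b}) := by
  rw [← lintegral_map (.of_discrete) hW, lintegral_countable']
  simp only [Measure.map_apply hW (measurableSet_singleton _)]

variable {α : Type*} [MeasurableSpace α] [MeasurableSingletonClass α] [Countable α]
  [IsFiniteMeasure μ] {Z : ℕ → Ω → α} {S : Set α} {g : α → ℝ≥0∞}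

theorem measurableSet_avoidsUpTo (hZ : ∀ t, Measurable (Z t)) (t : ℕ) :
    MeasurableSet (avoidsUpTo Z S t) := by
  rw [avoidsUpTo_eq_preimage]
  exact measurable_trajectory hZ t (.of_discrete)

theorem measure_add_setLIntegral_succ_le_of_drift (hZ : ∀ t, Measurable (Z t))
    (hdrift : ∀ t (z : ℕ → α), z t ∉ S → μ {ω | ∀ s ≤ t, Z s ω = z s} ≠ 0 →
      ∫⁻ ω, g (Z (t + 1) ω) ∂μ[|{ω | ∀ s ≤ t, Z s ω = z s}] + 1 ≤ g (z t)) (t : ℕ) :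
    μ (avoidsUpTo Z S t) + ∫⁻ ω in avoidsUpTo Z S (t + 1), g (Z (t + 1) ω) ∂μ ≤
      ∫⁻ ω in avoidsUpTo Z S t, g (Z t ω) ∂μ := by
  have hP := measurable_trajectory hZ t
  calc _ ≤ ∫⁻ ω in avoidsUpTo Z S t, g (Z (t + 1) ω) ∂μ + μ (avoidsUpTo Z S t) := by
        rw [add_comm]
        gcongr
        exact avoidsUpTo_succ_subset Z S t
    _ = ∫⁻ ω in avoidsUpTo Z S t, (g (Z (t + 1) ω) + 1) ∂μ := by
        rw [lintegral_add_right _ measurable_const, setLIntegral_one]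
    _ ≤ _ := by
        rw [avoidsUpTo_eq_preimage]
        refine setLIntegral_preimage_le_of_forall_fiber hP _ fun v hv => ?_
        have hconst : Set.EqOn (fun ω => g (Z t ω)) (fun _ => g (v (Fin.clamp t t)))
            (trajectory Z t ⁻¹' {v}) := by
          intro ω hω
          rw [trajectory_preimage_singleton] at hω
          simp only [hω t le_rfl]
        rw [setLIntegral_congr_fun (hP (measurableSet_singleton v)) hconst, setLIntegral_const,
          lintegral_add_right _ measurable_const, setLIntegral_one, trajectory_preimage_singleton]
        exact setLIntegral_add_measure_le_of_cond (hdrift t _ (hv _))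

theorem lintegral_hittingTime_le_of_drift (hZ : ∀ t, Measurable (Z t))
    (hdrift : ∀ t (z : ℕ → α), z t ∉ S → μ {ω | ∀ s ≤ t, Z s ω = z s} ≠ 0 →
      ∫⁻ ω, g (Z (t + 1) ω) ∂μ[|{ω | ∀ s ≤ t, Z s ω = z s}] + 1 ≤ g (z t)) :
    ∫⁻ ω, (⨅ (t : ℕ) (_ : Z t ω ∈ S), (t : ℝ≥0∞)) ∂μ ≤ ∫⁻ ω, g (Z 0 ω) ∂μ := by
  have hU := measurableSet_avoidsUpTo (S := S) hZ
  have hpartial (n : ℕ) : ∑ t ∈ range n, μ (avoidsUpTo Z S t) +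
      ∫⁻ ω in avoidsUpTo Z S n, g (Z n ω) ∂μ ≤ ∫⁻ ω in avoidsUpTo Z S 0, g (Z 0 ω) ∂μ := by
    induction n with
    | zero => simp
    | succ n ih =>
      rw [sum_range_succ, add_assoc]
      grw [measure_add_setLIntegral_succ_le_of_drift hZ hdrift n]
      exact ih
  calc ∫⁻ ω, (⨅ (t : ℕ) (_ : Z t ω ∈ S), (t : ℝ≥0∞)) ∂μ
      = ∫⁻ ω, ∑' t, (avoidsUpTo Z S t).indicator 1 ω ∂μ :=
        lintegral_congr fun ω => iInf_natCast_eq_tsum_indicator _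
    _ = ∑' t, μ (avoidsUpTo Z S t) := by
        rw [lintegral_tsum fun t => (measurable_one.indicator (hU t)).aemeasurable]
        simp only [lintegral_indicator_one (hU _)]
    _ ≤ ∫⁻ ω in avoidsUpTo Z S 0, g (Z 0 ω) ∂μ :=
        ENNReal.tsum_le_of_sum_range_le fun n => le_self_add.trans (hpartial n)
    _ ≤ ∫⁻ ω, g (Z 0 ω) ∂μ := setLIntegral_le_lintegral _ _

end Drift

section Acceptance
variable {N μbar Δm Δp : ℕ} {p : ℝ}

/-- These bounds are what make `α⁺ ≤ 1` above `μ̄` and `α⁻ ≤ 1` below it. -/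
theorem muBar_mem_Icc (hp0 : 0 < p) (hp1 : p < 1)
    (hμbar : μbar =
      if (N : ℝ) * p - ⌊(N : ℝ) * p⌋₊ ≤ 1 - p then ⌊(N : ℝ) * p⌋₊ else ⌈(N : ℝ) * p⌉₊) :
    (μbar : ℝ) ∈ Set.Icc ((N : ℝ) * p + p - 1) (((N : ℝ) + 1) * p) := by
  have hfloor : (⌊(N : ℝ) * p⌋₊ : ℝ) ≤ N * p := Nat.floor_le (by positivity)
  split_ifs at hμbar with hξ <;> subst hμbar
  · constructor <;> linarith
  · have hceil : (⌈(N : ℝ) * p⌉₊ : ℝ) ≤ ⌊(N : ℝ) * p⌋₊ + 1 := by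
      exact_mod_cast Nat.ceil_le_floor_add_one _
    constructor <;> linarith [Nat.le_ceil ((N : ℝ) * p)]

theorem alphaPlus_nonneg (hp0 : 0 < p) (hp1 : p < 1) (hΔp : μbar + Δp ≤ N) (k : ℕ) :
    0 ≤ alphaPlus N p μbar Δp k := by
  unfold alphaPlus
  split_ifs with h₁ h₂
  · exact zero_le_one
  · have hkN : (k : ℝ) ≤ N := by exact_mod_cast (h₂.trans_le hΔp).le
    have : 0 < 1 - p := by linarith
    have : 0 ≤ (N : ℝ) - k := by linarith
    positivity
  · exact le_rfl

theorem alphaPlus_le_one (hp1 : p < 1) (hμ : (N : ℝ) * p + p - 1 ≤ μbar)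
    (k : ℕ) : alphaPlus N p μbar Δp k ≤ 1 := by
  unfold alphaPlus
  split_ifs with h₁ h₂
  · exact le_rfl
  · have hk : (μbar : ℝ) ≤ k := by exact_mod_cast not_lt.1 h₁
    have : 0 < 1 - p := by linarith
    rw [div_mul_div_comm, div_le_one (by positivity)]
    nlinarith
  · exact zero_le_one

theorem alphaMinus_nonneg (hp0 : 0 < p) (hp1 : p < 1) (hμ : (μbar : ℝ) ≤ ((N : ℝ) + 1) * p)
    (k : ℕ) : 0 ≤ alphaMinus N p μbar Δm k := by
  unfold alphaMinus
  split_ifs with h₁ h₂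
  · exact zero_le_one
  · have hk : (k : ℝ) ≤ μbar := by exact_mod_cast not_lt.1 h₁
    have : 0 < 1 - p := by linarith
    have : 0 < (N : ℝ) - k + 1 := by nlinarith
    positivity
  · exact le_rfl

theorem alphaMinus_le_one (hp0 : 0 < p) (hp1 : p < 1) (hμ : (μbar : ℝ) ≤ ((N : ℝ) + 1) * p)
    (k : ℕ) : alphaMinus N p μbar Δm k ≤ 1 := by
  unfold alphaMinus
  split_ifs with h₁ h₂
  · exact le_rfl
  · have hk : (k : ℝ) ≤ μbar := by exact_mod_cast not_lt.1 h₁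
    have : 0 < (N : ℝ) - k + 1 := by nlinarith
    rw [div_mul_div_comm, div_le_one (by positivity)]
    nlinarith
  · exact zero_le_one

theorem alphaMinus_eq_zero_of_le {k : ℕ} (hk : k ≤ μbar - Δm) : alphaMinus N p μbar Δm k = 0 := by
  unfold alphaMinus
  rw [if_neg (by omega), if_neg (by omega)]

theorem alphaPlus_antitone (hp0 : 0 < p) (hp1 : p < 1) (hΔp : μbar + Δp ≤ N)
    (hμ : (N : ℝ) * p + p - 1 ≤ μbar) : Antitone (alphaPlus N p μbar Δp) := by
  intro b a hba
  by_cases hb : b < μbar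
  · rw [show alphaPlus N p μbar Δp b = 1 by simp [alphaPlus, hb]]
    exact alphaPlus_le_one hp1 hμ a
  by_cases ha : a < μbar + Δp
  · have hab : (b : ℝ) ≤ a := by exact_mod_cast hba
    have haN : (a : ℝ) ≤ N := by exact_mod_cast (ha.trans_le hΔp).le
    have : 0 < 1 - p := by linarith
    simp only [alphaPlus, if_neg hb, if_neg (hb.imp hba.trans_lt), if_pos ha,
      if_pos (hba.trans_lt ha)]
    gcongr ?_ * _
    rw [div_le_div_iff₀ (by positivity) (by positivity)]
    nlinarith
  · rw [show alphaPlus N p μbar Δp a = 0 by simp [alphaPlus, ha, (hb.imp hba.trans_lt)]]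
    exact alphaPlus_nonneg hp0 hp1 hΔp b

theorem alphaMinus_monotone (hp0 : 0 < p) (hp1 : p < 1) (hμ : (μbar : ℝ) ≤ ((N : ℝ) + 1) * p) :
    Monotone (alphaMinus N p μbar Δm) := by
  intro b a hba
  by_cases ha : μbar < a
  · rw [show alphaMinus N p μbar Δm a = 1 by simp [alphaMinus, ha]]
    exact alphaMinus_le_one hp0 hp1 hμ b
  by_cases hb : μbar - Δm < b
  · have hab : (b : ℝ) ≤ a := by exact_mod_cast hba
    have haμ : (a : ℝ) ≤ μbar := by exact_mod_cast not_lt.1 ha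
    have : 0 < (N : ℝ) - a + 1 := by nlinarith
    simp only [alphaMinus, if_neg ha, if_neg (ha.imp hba.trans_lt'), if_pos hb,
      if_pos (hb.trans_le hba)]
    gcongr ?_ * _
    rw [div_le_div_iff₀ (by linarith) this]
    nlinarith
  · rw [show alphaMinus N p μbar Δm b = 0 by simp [alphaMinus, hb, (ha.imp hba.trans_lt')]]
    exact alphaMinus_nonneg hp0 hp1 hμ a

theorem one_le_alphaPlus_add_alphaMinus (hp0 : 0 < p) (hp1 : p < 1) (hΔp : μbar + Δp ≤ N)
    (hμ : (μbar : ℝ) ≤ ((N : ℝ) + 1) * p) {b a : ℕ} (hba : b < a) :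
    1 ≤ alphaPlus N p μbar Δp b + alphaMinus N p μbar Δm a := by
  by_cases ha : μbar < a
  · rw [show alphaMinus N p μbar Δm a = 1 by simp [alphaMinus, ha]]
    linarith [alphaPlus_nonneg hp0 hp1 hΔp b]
  · rw [show alphaPlus N p μbar Δp b = 1 by simp [alphaPlus, show b < μbar by omega]]
    linarith [alphaMinus_nonneg (Δm := Δm) hp0 hp1 hμ a]

end Acceptance

def couplingPotential (Δ d : ℕ) : ℝ := 2 * d * (2 * Δ + 1 - d)

theorem couplingPotential_succ (Δ d : ℕ) :
    couplingPotential Δ (d + 1) = couplingPotential Δ d + 4 * ((Δ : ℝ) - d) := by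
  simp only [couplingPotential, Nat.cast_succ]
  ring

theorem couplingPotential_pred (Δ : ℕ) {d : ℕ} (hd : 1 ≤ d) :
    couplingPotential Δ (d - 1) = couplingPotential Δ d - 4 * ((Δ : ℝ) - d) - 4 := by
  simp only [couplingPotential, Nat.cast_sub hd, Nat.cast_one]
  ring

theorem couplingPotential_nonneg {Δ d : ℕ} (hd : d ≤ 2 * Δ + 1) : 0 ≤ couplingPotential Δ d := by
  have : (d : ℝ) ≤ 2 * Δ + 1 := by exact_mod_cast hd
  unfold couplingPotential
  have : (0 : ℝ) ≤ 2 * Δ + 1 - d := by linarith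
  positivity

theorem couplingPotential_le (Δ d : ℕ) : couplingPotential Δ d ≤ 2 * ((Δ : ℝ) + 1) ^ 2 := by
  unfold couplingPotential
  nlinarith [sq_nonneg (2 * (d : ℝ) - 2 * Δ - 1)]

section Kernel
variable {N μbar Δm Δp : ℕ} {p : ℝ}

theorem couplingPotential_drift_of_lt (hp0 : 0 < p) (hp1 : p < 1) (hΔp : μbar + Δp ≤ N)
    (hμ : (μbar : ℝ) ∈ Set.Icc ((N : ℝ) * p + p - 1) (((N : ℝ) + 1) * p)) {b a : ℕ}
    (hb : μbar - Δm ≤ b) (ha : a ≤ μbar + Δp) (hba : b < a) :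
    alphaPlus N p μbar Δp b * couplingPotential (Δp + Δm) (Nat.dist (b + 1) a) +
      alphaMinus N p μbar Δm b * couplingPotential (Δp + Δm) (Nat.dist (b - 1) a) +
      alphaPlus N p μbar Δp a * couplingPotential (Δp + Δm) (Nat.dist b (a + 1)) +
      alphaMinus N p μbar Δm a * couplingPotential (Δp + Δm) (Nat.dist b (a - 1)) +
      (4 - alphaPlus N p μbar Δp b - alphaMinus N p μbar Δm b - alphaPlus N p μbar Δp a -
        alphaMinus N p μbar Δm a) * couplingPotential (Δp + Δm) (Nat.dist b a) ≤
    4 * couplingPotential (Δp + Δm) (Nat.dist b a) - 4 := by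
  have hd : 1 ≤ Nat.dist b a := by unfold Nat.dist; omega
  have hdΔ : ((Nat.dist b a : ℕ) : ℝ) ≤ (Δp + Δm : ℕ) := by
    exact_mod_cast (show Nat.dist b a ≤ Δp + Δm by unfold Nat.dist; omega)
  have hlow : alphaMinus N p μbar Δm b * couplingPotential (Δp + Δm) (Nat.dist (b - 1) a) =
      alphaMinus N p μbar Δm b * couplingPotential (Δp + Δm) (Nat.dist b a + 1) := by
    -- at `b = 0` the move to `b - 1` is truncated, but it has probability `α⁻(0) = 0`
    rcases Nat.eq_zero_or_pos b with rfl | hb0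
    · rw [alphaMinus_eq_zero_of_le (Nat.zero_le _), zero_mul, zero_mul]
    · rw [show Nat.dist (b - 1) a = Nat.dist b a + 1 by unfold Nat.dist; omega]
  rw [hlow, show Nat.dist (b + 1) a = Nat.dist b a - 1 by unfold Nat.dist; omega,
    show Nat.dist b (a + 1) = Nat.dist b a + 1 by unfold Nat.dist; omega,
    show Nat.dist b (a - 1) = Nat.dist b a - 1 by unfold Nat.dist; omega,
    couplingPotential_succ, couplingPotential_pred _ hd]
  have hA := one_le_alphaPlus_add_alphaMinus (Δm := Δm) hp0 hp1 hΔp hμ.2 hba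
  have hBA : alphaMinus N p μbar Δm b + alphaPlus N p μbar Δp a ≤
      alphaMinus N p μbar Δm a + alphaPlus N p μbar Δp b :=
    add_le_add (alphaMinus_monotone hp0 hp1 hμ.2 hba.le)
      (alphaPlus_antitone hp0 hp1 hΔp hμ.1 hba.le)
  nlinarith [mul_le_mul_of_nonneg_right hBA (sub_nonneg.2 hdΔ)]

theorem couplingPotential_drift (hp0 : 0 < p) (hp1 : p < 1) (hΔp : μbar + Δp ≤ N)
    (hμ : (μbar : ℝ) ∈ Set.Icc ((N : ℝ) * p + p - 1) (((N : ℝ) + 1) * p)) {x y : ℕ}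
    (hx : x ∈ Set.Icc (μbar - Δm) (μbar + Δp)) (hy : y ∈ Set.Icc (μbar - Δm) (μbar + Δp))
    (hxy : x ≠ y) :
    couplingPotential (Δp + Δm) (Nat.dist x (y + 1)) * (alphaPlus N p μbar Δp y / 4) +
      couplingPotential (Δp + Δm) (Nat.dist x (y - 1)) * (alphaMinus N p μbar Δm y / 4) +
      couplingPotential (Δp + Δm) (Nat.dist (x + 1) y) * (alphaPlus N p μbar Δp x / 4) +
      couplingPotential (Δp + Δm) (Nat.dist (x - 1) y) * (alphaMinus N p μbar Δm x / 4) +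
      couplingPotential (Δp + Δm) (Nat.dist x y) *
        ((1 - alphaPlus N p μbar Δp y) / 4 + (1 - alphaMinus N p μbar Δm y) / 4 +
          (1 - alphaPlus N p μbar Δp x) / 4 + (1 - alphaMinus N p μbar Δm x) / 4) + 1 ≤
    couplingPotential (Δp + Δm) (Nat.dist x y) := by
  rcases hxy.lt_or_gt with hlt | hgt
  · linarith [couplingPotential_drift_of_lt hp0 hp1 hΔp hμ hx.1 hy.2 hlt]
  · rw [Nat.dist_comm x (y + 1), Nat.dist_comm x (y - 1), Nat.dist_comm (x + 1),
      Nat.dist_comm (x - 1), Nat.dist_comm x y]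
    linarith [couplingPotential_drift_of_lt hp0 hp1 hΔp hμ hy.1 hx.2 hgt]

theorem ofReal_coupleKernel_eq (hP : ∀ k, alphaPlus N p μbar Δp k ∈ Set.Icc 0 1)
    (hM : ∀ k, alphaMinus N p μbar Δm k ∈ Set.Icc 0 1) (x y : ℕ) (q : ℕ × ℕ) :
    ENNReal.ofReal (coupleKernel N p μbar Δm Δp x y q.1 q.2) =
      (if q = (x, y + 1) then ENNReal.ofReal (alphaPlus N p μbar Δp y / 4) else 0) +
      (if q = (x, y - 1) then ENNReal.ofReal (alphaMinus N p μbar Δm y / 4) else 0) +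
      (if q = (x + 1, y) then ENNReal.ofReal (alphaPlus N p μbar Δp x / 4) else 0) +
      (if q = (x - 1, y) then ENNReal.ofReal (alphaMinus N p μbar Δm x / 4) else 0) +
      (if q = (x, y) then ENNReal.ofReal
        ((1 - alphaPlus N p μbar Δp y) / 4 + (1 - alphaMinus N p μbar Δm y) / 4 +
          (1 - alphaPlus N p μbar Δp x) / 4 + (1 - alphaMinus N p μbar Δm x) / 4) else 0) := by
  obtain ⟨a, b⟩ := q
  have hPx := hP x; have hPy := hP y; have hMx := hM x; have hMy := hM y
  simp only [Set.mem_Icc] at hPx hPy hMx hMy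
  simp only [coupleKernel, Prod.mk.injEq]
  rw [ENNReal.ofReal_add, ENNReal.ofReal_add, ENNReal.ofReal_add, ENNReal.ofReal_add]
  · simp only [apply_ite ENNReal.ofReal, ENNReal.ofReal_zero]
  all_goals repeat' apply add_nonneg
  all_goals apply ite_nonneg <;> linarith

theorem tsum_couplingPotential_mul_coupleKernel_add_one_le (hp0 : 0 < p) (hp1 : p < 1)
    (hΔp : μbar + Δp ≤ N)
    (hμ : (μbar : ℝ) ∈ Set.Icc ((N : ℝ) * p + p - 1) (((N : ℝ) + 1) * p)) {x y : ℕ}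
    (hx : x ∈ Set.Icc (μbar - Δm) (μbar + Δp)) (hy : y ∈ Set.Icc (μbar - Δm) (μbar + Δp))
    (hxy : x ≠ y) :
    ∑' q : ℕ × ℕ, ENNReal.ofReal (couplingPotential (Δp + Δm) (Nat.dist q.1 q.2)) *
        ENNReal.ofReal (coupleKernel N p μbar Δm Δp x y q.1 q.2) + 1 ≤
      ENNReal.ofReal (couplingPotential (Δp + Δm) (Nat.dist x y)) := by
  have hP (k : ℕ) : alphaPlus N p μbar Δp k ∈ Set.Icc 0 1 :=
    ⟨alphaPlus_nonneg hp0 hp1 hΔp k, alphaPlus_le_one hp1 hμ.1 k⟩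
  have hM (k : ℕ) : alphaMinus N p μbar Δm k ∈ Set.Icc 0 1 :=
    ⟨alphaMinus_nonneg hp0 hp1 hμ.2 k, alphaMinus_le_one hp0 hp1 hμ.2 k⟩
  simp only [ofReal_coupleKernel_eq hP hM, mul_add, mul_ite, mul_zero]
  rw [ENNReal.tsum_add, ENNReal.tsum_add, ENNReal.tsum_add, ENNReal.tsum_add]
  simp only [tsum_ite_eq]
  refine le_trans (le_of_eq ?_)
    (ENNReal.ofReal_le_ofReal (couplingPotential_drift hp0 hp1 hΔp hμ hx hy hxy))
  obtain ⟨hx₁, hx₂⟩ := hx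
  obtain ⟨hy₁, hy₂⟩ := hy
  have hpot {a b : ℕ} (h : Nat.dist a b ≤ 2 * (Δp + Δm) + 1) :
      0 ≤ couplingPotential (Δp + Δm) (Nat.dist a b) := couplingPotential_nonneg h
  have h₁ := hpot (a := x) (b := y + 1) (by unfold Nat.dist; omega)
  have h₂ := hpot (a := x) (b := y - 1) (by unfold Nat.dist; omega)
  have h₃ := hpot (a := x + 1) (b := y) (by unfold Nat.dist; omega)
  have h₄ := hpot (a := x - 1) (b := y) (by unfold Nat.dist; omega)
  have h₅ := hpot (a := x) (b := y) (by unfold Nat.dist; omega)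
  have m₁ := mul_nonneg h₁ (div_nonneg (hP y).1 zero_le_four)
  have m₂ := mul_nonneg h₂ (div_nonneg (hM y).1 zero_le_four)
  have m₃ := mul_nonneg h₃ (div_nonneg (hP x).1 zero_le_four)
  have m₄ := mul_nonneg h₄ (div_nonneg (hM x).1 zero_le_four)
  have m₅ := mul_nonneg h₅
    (show 0 ≤ (1 - alphaPlus N p μbar Δp y) / 4 + (1 - alphaMinus N p μbar Δm y) / 4 +
      (1 - alphaPlus N p μbar Δp x) / 4 + (1 - alphaMinus N p μbar Δm x) / 4 by
      linarith [(hP x).2, (hP y).2, (hM x).2, (hM y).2])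
  have m₁₂ := add_nonneg m₁ m₂
  have m₁₃ := add_nonneg m₁₂ m₃
  have m₁₄ := add_nonneg m₁₃ m₄
  rw [← ENNReal.ofReal_mul h₁, ← ENNReal.ofReal_mul h₂, ← ENNReal.ofReal_mul h₃,
    ← ENNReal.ofReal_mul h₄, ← ENNReal.ofReal_mul h₅, ← ENNReal.ofReal_add m₁ m₂,
    ← ENNReal.ofReal_add m₁₂ m₃, ← ENNReal.ofReal_add m₁₃ m₄, ← ENNReal.ofReal_add m₁₄ m₅,
    ← ENNReal.ofReal_one, ← ENNReal.ofReal_add (add_nonneg m₁₄ m₅) zero_le_one]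

end Kernel

theorem lintegral_cond_couplingPotential_add_one_le {Ω : Type*} [MeasurableSpace Ω]
    (μ : Measure Ω) {N : ℕ} {p : ℝ} (hp0 : 0 < p) (hp1 : p < 1) {μbar Δm Δp : ℕ}
    (hΔp : μbar + Δp ≤ N)
    (hμ : (μbar : ℝ) ∈ Set.Icc ((N : ℝ) * p + p - 1) (((N : ℝ) + 1) * p))
    (X Y : ℕ → Ω → ℕ) (hXmeas : ∀ t, Measurable (X t)) (hYmeas : ∀ t, Measurable (Y t))
    (hrange : ∀ t ω, X t ω ∈ Set.Icc (μbar - Δm) (μbar + Δp) ∧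
      Y t ω ∈ Set.Icc (μbar - Δm) (μbar + Δp))
    (hstep : ∀ (t : ℕ) (x y : ℕ → ℕ), x t ≠ y t →
      μ {ω | ∀ s ≤ t, X s ω = x s ∧ Y s ω = y s} ≠ 0 →
      ∀ a b : ℕ,
        μ[|{ω | ∀ s ≤ t, X s ω = x s ∧ Y s ω = y s}]
            {ω | X (t + 1) ω = a ∧ Y (t + 1) ω = b} =
          ENNReal.ofReal (coupleKernel N p μbar Δm Δp (x t) (y t) a b))
    (t : ℕ) (z : ℕ → ℕ × ℕ) (hz : z t ∉ {q | q.1 = q.2})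
    (hC : μ {ω | ∀ s ≤ t, (X s ω, Y s ω) = z s} ≠ 0) :
    ∫⁻ ω, ENNReal.ofReal (couplingPotential (Δp + Δm) (Nat.dist (X (t + 1) ω) (Y (t + 1) ω)))
        ∂μ[|{ω | ∀ s ≤ t, (X s ω, Y s ω) = z s}] + 1 ≤
      ENNReal.ofReal (couplingPotential (Δp + Δm) (Nat.dist (z t).1 (z t).2)) := by
  have hcyl : {ω | ∀ s ≤ t, (X s ω, Y s ω) = z s} =
      {ω | ∀ s ≤ t, X s ω = (z s).1 ∧ Y s ω = (z s).2} := by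
    simp only [Prod.ext_iff]
  obtain ⟨ω₀, hω₀⟩ := nonempty_of_measure_ne_zero hC
  have hz₀ : z t = (X t ω₀, Y t ω₀) := (hω₀ t le_rfl).symm
  rw [lintegral_comp_eq_tsum _ ((hXmeas (t + 1)).prodMk (hYmeas (t + 1)))
    (fun q => ENNReal.ofReal (couplingPotential (Δp + Δm) (Nat.dist q.1 q.2)))]
  rw [hcyl] at hC ⊢
  simp only [Set.preimage, Set.mem_singleton_iff, Prod.ext_iff,
    hstep t (fun s => (z s).1) (fun s => (z s).2) hz hC]
  rw [hz₀] at hz ⊢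
  exact tsum_couplingPotential_mul_coupleKernel_add_one_le hp0 hp1 hΔp hμ (hrange t ω₀).1
    (hrange t ω₀).2 hz

theorem coupling_time_expectation_le_general
    {Ω : Type*} [MeasurableSpace Ω] (μ : Measure Ω) [IsProbabilityMeasure μ]
    (N : ℕ) (p : ℝ) (hp0 : 0 < p) (hp1 : p < 1)
    (μbar Δm Δp : ℕ)
    (hμbar : μbar =
      if (N : ℝ) * p - ⌊(N : ℝ) * p⌋₊ ≤ 1 - p then ⌊(N : ℝ) * p⌋₊ else ⌈(N : ℝ) * p⌉₊)
    (hΔp : μbar + Δp ≤ N)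
    (X Y : ℕ → Ω → ℕ) (hXmeas : ∀ t, Measurable (X t)) (hYmeas : ∀ t, Measurable (Y t))
    (hrange : ∀ t ω, X t ω ∈ Set.Icc (μbar - Δm) (μbar + Δp) ∧
      Y t ω ∈ Set.Icc (μbar - Δm) (μbar + Δp))
    (hstep : ∀ (t : ℕ) (x y : ℕ → ℕ), x t ≠ y t →
      μ {ω | ∀ s ≤ t, X s ω = x s ∧ Y s ω = y s} ≠ 0 →
      ∀ a b : ℕ,
        μ[|{ω | ∀ s ≤ t, X s ω = x s ∧ Y s ω = y s}]
            {ω | X (t + 1) ω = a ∧ Y (t + 1) ω = b} =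
          ENNReal.ofReal (coupleKernel N p μbar Δm Δp (x t) (y t) a b)) :
    ∫⁻ ω, (⨅ (t : ℕ) (_ : X t ω = Y t ω), (t : ℝ≥0∞)) ∂μ ≤
      ENNReal.ofReal (2 * ((Δp : ℝ) + (Δm : ℝ) + 1) ^ 2) := by
  have hμ := muBar_mem_Icc hp0 hp1 hμbar
  calc ∫⁻ ω, (⨅ (t : ℕ) (_ : X t ω = Y t ω), (t : ℝ≥0∞)) ∂μ
      ≤ ∫⁻ ω, ENNReal.ofReal (couplingPotential (Δp + Δm) (Nat.dist (X 0 ω) (Y 0 ω))) ∂μ :=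
        lintegral_hittingTime_le_of_drift (Z := fun t ω => (X t ω, Y t ω)) (S := {q | q.1 = q.2})
          (g := fun q => ENNReal.ofReal (couplingPotential (Δp + Δm) (Nat.dist q.1 q.2)))
          (fun t => (hXmeas t).prodMk (hYmeas t))
          (lintegral_cond_couplingPotential_add_one_le μ hp0 hp1 hΔp hμ X Y hXmeas hYmeas
            hrange hstep)
    _ ≤ ∫⁻ _, ENNReal.ofReal (2 * ((Δp : ℝ) + (Δm : ℝ) + 1) ^ 2) ∂μ :=
        lintegral_mono fun ω => ENNReal.ofReal_le_ofReal (by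
          exact_mod_cast couplingPotential_le (Δp + Δm) (Nat.dist (X 0 ω) (Y 0 ω)))
    _ = ENNReal.ofReal (2 * ((Δp : ℝ) + (Δm : ℝ) + 1) ^ 2) := by simp

/-- For the coupling `(X_t, Y_t)` of two copies of the Metropolis chain
on `I = [μ̄ - Δ⁻, μ̄ + Δ⁺]` started at `X_0 = μ̄ + Δ⁺` and `Y_0 = μ̄ - Δ⁻`, the coupling
time `T = min{t : X_t = Y_t}` satisfies `E[T] ≤ 2(Δ⁺ + Δ⁻ + 1)²` (in particular `T` is
a.s. finite). -/
theorem coupling_time_expectation_le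
    {Ω : Type*} [MeasurableSpace Ω] (μ : Measure Ω) [IsProbabilityMeasure μ]
    (N : ℕ) (hN : 1 ≤ N) (p : ℝ) (hp0 : 0 < p) (hp1 : p < 1)
    (μbar Δm Δp : ℕ)
    (hμbar : μbar =
      if (N : ℝ) * p - ⌊(N : ℝ) * p⌋₊ ≤ 1 - p then ⌊(N : ℝ) * p⌋₊ else ⌈(N : ℝ) * p⌉₊)
    (hΔm : Δm ≤ μbar) (hΔp : μbar + Δp ≤ N)
    (X Y : ℕ → Ω → ℕ) (hXmeas : ∀ t, Measurable (X t)) (hYmeas : ∀ t, Measurable (Y t))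
    (hrange : ∀ t ω, X t ω ∈ Set.Icc (μbar - Δm) (μbar + Δp) ∧
      Y t ω ∈ Set.Icc (μbar - Δm) (μbar + Δp))
    (hX0 : ∀ᵐ ω ∂μ, X 0 ω = μbar + Δp) (hY0 : ∀ᵐ ω ∂μ, Y 0 ω = μbar - Δm)
    (hstep : ∀ (t : ℕ) (x y : ℕ → ℕ), x t ≠ y t →
      μ {ω | ∀ s ≤ t, X s ω = x s ∧ Y s ω = y s} ≠ 0 →
      ∀ a b : ℕ,
        μ[|{ω | ∀ s ≤ t, X s ω = x s ∧ Y s ω = y s}]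
            {ω | X (t + 1) ω = a ∧ Y (t + 1) ω = b} =
          ENNReal.ofReal (coupleKernel N p μbar Δm Δp (x t) (y t) a b)) :
    ∫⁻ ω, (⨅ (t : ℕ) (_ : X t ω = Y t ω), (t : ℝ≥0∞)) ∂μ ≤
      ENNReal.ofReal (2 * ((Δp : ℝ) + (Δm : ℝ) + 1) ^ 2) :=
  coupling_time_expectation_le_general μ N p hp0 hp1 μbar Δm Δp hμbar hΔp X Y hXmeas hYmeas hrange
    hstep
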